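/- Let (d_{γ,ε,ξ}, l*, i, p) be the standard model quadratic extension associated to a quadratic cocycle (γ,ε,ξ) ∈ Z²(l, a, ω_a). Then the center of d_{γ,ε,ξ} is contained in l* ⊕ a if and only if the following holds: the only L ∈ l for which there exists A ∈ a with ad_a(A) + ξ(L) = 0, γ(L) + β₀(A) = 0, α(L,·) = ξ₀(A), and ε(L,·) = γ₀(A) simultaneously, is L = 0. -/
import Mathlib


namespace Stmt8

variable {l a : Type*} [AddCommGroup l] [Module ℝ l] [LieRing a] [LieAlgebra ℝ a]

/-- The underlying vector space `l* ⊕ a ⊕ l` of the standard model. -/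
abbrev Dm (l a : Type*) [AddCommGroup l] [Module ℝ l] [AddCommGroup a] [Module ℝ a] :=
  (Module.Dual ℝ l) × a × l

/-- `β(A₁, A₂) = L ↦ −ω_a(ξ(L)A₁, A₂) − ω_a(A₁, ξ(L)A₂)` as an element of `l*`. -/
def betaF (ωa : a →ₗ[ℝ] a →ₗ[ℝ] ℝ) (ξ : l →ₗ[ℝ] (a →ₗ[ℝ] a)) (A₁ A₂ : a) :
    Module.Dual ℝ l :=
  - ((ωa.flip A₂) ∘ₗ (ξ.flip A₁)) - ((ωa A₁) ∘ₗ (ξ.flip A₂))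

/-- The bracket of the standard model `d_{γ,ε,ξ}(l,a)` on `l* ⊕ a ⊕ l`. -/
def br (ωa : a →ₗ[ℝ] a →ₗ[ℝ] ℝ) (γ : l →ₗ[ℝ] (a →ₗ[ℝ] Module.Dual ℝ l))
    (ε : l →ₗ[ℝ] (l →ₗ[ℝ] Module.Dual ℝ l)) (ξ : l →ₗ[ℝ] (a →ₗ[ℝ] a))
    (αf : l → l → a) : Dm l a → Dm l a → Dm l a :=
  fun x y =>
    (betaF ωa ξ x.2.1 y.2.1 + γ x.2.2 y.2.1 - γ y.2.2 x.2.1 + ε x.2.2 y.2.2,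
     ⁅x.2.1, y.2.1⁆ + ξ x.2.2 y.2.1 - ξ y.2.2 x.2.1 + αf x.2.2 y.2.2,
     0)

/-- The symplectic form of the standard model. -/
def Om (ωa : a →ₗ[ℝ] a →ₗ[ℝ] ℝ) : Dm l a → Dm l a → ℝ :=
  fun x y => x.1 y.2.2 + ωa x.2.1 y.2.1 - y.1 x.2.2

/-- The five conditions defining the set `Z²(l, a, ω_a)` of quadratic cocycles
(with `αf` the `ω_a`-dual datum `α` of `γ`). -/
def IsQuadCocycle (ωa : a →ₗ[ℝ] a →ₗ[ℝ] ℝ) (γ : l →ₗ[ℝ] (a →ₗ[ℝ] Module.Dual ℝ l))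
    (ε : l →ₗ[ℝ] (l →ₗ[ℝ] Module.Dual ℝ l)) (ξ : l →ₗ[ℝ] (a →ₗ[ℝ] a))
    (αf : l → l → a) : Prop :=
  -- (1) (ξ, α) is a factor system :
  ((∀ (L : l) (X Y : a), ξ L ⁅X, Y⁆ = ⁅ξ L X, Y⁆ + ⁅X, ξ L Y⁆) ∧
    (∀ (L₁ L₂ : l) (A : a), ξ L₁ (ξ L₂ A) - ξ L₂ (ξ L₁ A) = ⁅αf L₁ L₂, A⁆) ∧
    (∀ L₁ L₂ L₃ : l, ξ L₁ (αf L₂ L₃) - ξ L₂ (αf L₁ L₃) + ξ L₃ (αf L₁ L₂) = 0)) ∧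
  -- (2) :
  (∀ (L : l) (A₁ A₂ : a),
      betaF ωa ξ (ξ L A₁) A₂ + betaF ωa ξ A₁ (ξ L A₂) = γ L ⁅A₁, A₂⁆) ∧
  -- (3) d_{ξ̂}γ + β₀ ∘ α = 0 :
  (∀ (L₁ L₂ : l) (A : a),
      γ L₂ (ξ L₁ A) - γ L₁ (ξ L₂ A) + betaF ωa ξ (αf L₁ L₂) A = 0) ∧
  -- (4) ev(γ ∧ α) = 0 :
  (∀ L₁ L₂ L₃ : l,
      γ L₁ (αf L₂ L₃) - γ L₂ (αf L₁ L₃) + γ L₃ (αf L₁ L₂) = 0) ∧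
  -- (5) :
  (∀ L₁ L₂ L₃ : l, ε L₁ L₂ L₃ + ε L₂ L₃ L₁ + ε L₃ L₁ L₂ = 0)

/-- the center of the standard model `d_{γ,ε,ξ}(l,a)` is contained in
`l* ⊕ a` if and only if the only `L ∈ l` admitting `A ∈ a` with
`ad_a(A) + ξ(L) = 0`, `γ(L) + β₀(A) = 0`, `α(L,·) = ξ₀(A)` and `ε(L,·) = γ₀(A)`
is `L = 0`. -/
theorem center_in_dual_plus_a_iff_condition_a
    [FiniteDimensional ℝ l] [FiniteDimensional ℝ a]
    (ωa : a →ₗ[ℝ] a →ₗ[ℝ] ℝ)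
    (hskew : ∀ X Y : a, ωa X Y = - ωa Y X)
    (hnd : ∀ X : a, (∀ Y : a, ωa X Y = 0) → X = 0)
    (hclosed : ∀ X Y Z : a, ωa ⁅X, Y⁆ Z - ωa ⁅X, Z⁆ Y + ωa ⁅Y, Z⁆ X = 0)
    (γ : l →ₗ[ℝ] (a →ₗ[ℝ] Module.Dual ℝ l))
    (ε : l →ₗ[ℝ] (l →ₗ[ℝ] Module.Dual ℝ l)) (hε : ∀ L : l, ε L L = 0)
    (ξ : l →ₗ[ℝ] (a →ₗ[ℝ] a))
    (αf : l → l → a)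
    (hα : ∀ (L₁ L₂ : l) (A : a), γ L₁ A L₂ - γ L₂ A L₁ = ωa (αf L₁ L₂) A)
    (hcoc : IsQuadCocycle ωa γ ε ξ αf) :
    (∀ x : Dm l a, (∀ y : Dm l a, br ωa γ ε ξ αf x y = 0) → x.2.2 = 0)
    ↔ (∀ L : l,
        (∃ A : a,
          (∀ B : a, ⁅A, B⁆ + ξ L B = 0) ∧
          (∀ B : a, γ L B + betaF ωa ξ A B = 0) ∧
          (∀ L' : l, αf L L' = ξ L' A) ∧
          (∀ L' : l, ε L L' = γ L' A)) → L = 0) := by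
  constructor
  · intro hc L ⟨A, h1, h2, h3, h4⟩
    refine hc (0, A, L) (fun y => ?_)
    have e1 : betaF ωa ξ A y.2.1 = - γ L y.2.1 :=
      eq_neg_of_add_eq_zero_right (h2 y.2.1)
    have e2 : ⁅A, y.2.1⁆ = - ξ L y.2.1 :=
      eq_neg_of_add_eq_zero_left (h1 y.2.1)
    show ((_ : Module.Dual ℝ l), (_ : a), (0 : l)) = (0, 0, 0)
    refine Prod.ext ?_ (Prod.ext ?_ rfl)
    · show betaF ωa ξ A y.2.1 + γ L y.2.1 - γ y.2.2 A + ε L y.2.2 = 0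
      rw [e1, h4 y.2.2]; abel
    · show ⁅A, y.2.1⁆ + ξ L y.2.1 - ξ y.2.2 A + αf L y.2.2 = 0
      rw [e2, h3 y.2.2]; abel
  · intro hc x hx
    obtain ⟨f, A, L⟩ := x
    have hα0 : αf L 0 = 0 := by
      refine hnd _ (fun B => ?_)
      have := hα L 0 B
      simpa using this.symm
    have hβ0 : ∀ A : a, betaF ωa ξ A 0 = 0 := by
      intro A; unfold betaF; ext L'; simp
    refine hc L ⟨A, ?_, ?_, ?_, ?_⟩
    · intro B
      have h := congrArg (fun z : Dm l a => z.2.1) (hx (0, B, 0))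
      simpa [br, hα0] using h
    · intro B
      have h := congrArg (fun z : Dm l a => z.1) (hx (0, B, 0))
      have h' : betaF ωa ξ A B + γ L B = 0 := by simpa [br] using h
      rw [add_comm] at h'; exact h'
    · intro L'
      have h := congrArg (fun z : Dm l a => z.2.1) (hx (0, 0, L'))
      have h' : ξ L 0 - ξ L' A + αf L L' = 0 := by simpa [br] using h
      have : - ξ L' A + αf L L' = 0 := by simpa using h'
      linear_combination (norm := abel) this
    · intro L'
      have h := congrArg (fun z : Dm l a => z.1) (hx (0, 0, L'))
      have h' : betaF ωa ξ A 0 + γ L 0 - γ L' A + ε L L' = 0 := by simpa [br] using h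
      rw [hβ0] at h'
      have : - γ L' A + ε L L' = 0 := by simpa using h'
      linear_combination (norm := abel) this


end Stmt8
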